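/- arXiv:1504.02658 — 3 statements merged into one kernel-verified Lean document; each statement's English description precedes it below -/
import Mathlib

section
/- The mean–semideviation risk measure ρ(X) = E[X] + κ·‖(X − E[X])₊‖_p with κ ∈ [0,1], p ≥ 1, is subadditive: ρ(X + Y) ≤ ρ(X) + ρ(Y) for X, Y ∈ L^p. -/
open MeasureTheory

/-! The mean is additive, and the positive part of the centred sum `X + Y` is pointwise dominated
by the sum of the positive parts of the centred `X` and `Y`; the semideviations are `L^p` norms of
these positive parts, so Minkowski's inequality bounds the semideviation of `X + Y` by the sum of
the two, and multiplying by `κ ≥ 0` keeps the inequality. -/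

lemma max_add_sub_add_zero_le {G : Type*} [AddCommGroup G] [LinearOrder G]
    [IsOrderedAddMonoid G] (x y a b : G) :
    max (x + y - (a + b)) 0 ≤ max (x - a) 0 + max (y - b) 0 := by
  simpa only [add_sub_add_comm, add_zero] using
    max_add_add_le_max_add_max (a := x - a) (b := y - b) (c := 0) (d := 0)

section

variable {α : Type*} [MeasurableSpace α] {μ : Measure α}

lemma memLp_ofReal_of_integrable_abs_rpow {f : α → ℝ} {p : ℝ} (hp : 0 < p)
    (hf : AEStronglyMeasurable f μ) (hfp : Integrable (fun x => |f x| ^ p) μ) :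
    MemLp f (ENNReal.ofReal p) μ := by
  rw [← integrable_norm_rpow_iff hf (by simpa using hp) ENNReal.ofReal_ne_top,
    ENNReal.toReal_ofReal hp.le]
  exact hfp

lemma integral_rpow_rpow_inv_eq_toReal_eLpNorm {f : α → ℝ} {p : ℝ} (hp : 0 < p)
    (hf : MemLp f (ENNReal.ofReal p) μ) (hf0 : 0 ≤ f) :
    (∫ x, f x ^ p ∂μ) ^ (1 / p) = (eLpNorm f (ENNReal.ofReal p) μ).toReal := by
  rw [hf.eLpNorm_eq_integral_rpow_norm (by simpa using hp) ENNReal.ofReal_ne_top,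
    ENNReal.toReal_ofReal (by positivity), ENNReal.toReal_ofReal hp.le, one_div]
  simp only [Real.norm_of_nonneg (hf0 _)]

lemma integral_rpow_rpow_inv_le_add {f g h : α → ℝ} {p : ℝ} (hp : 1 ≤ p)
    (hf : MemLp f (ENNReal.ofReal p) μ) (hg : MemLp g (ENNReal.ofReal p) μ)
    (hh : AEStronglyMeasurable h μ) (hf0 : 0 ≤ f) (hg0 : 0 ≤ g) (hh0 : 0 ≤ h)
    (hle : h ≤ f + g) :
    (∫ x, h x ^ p ∂μ) ^ (1 / p) ≤ (∫ x, f x ^ p ∂μ) ^ (1 / p) + (∫ x, g x ^ p ∂μ) ^ (1 / p) := by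
  have hp0 : 0 < p := by linarith
  have hh_le : ∀ x, ‖h x‖ ≤ ‖(f + g) x‖ := fun x => by
    simpa only [Pi.add_apply, Real.norm_of_nonneg (hh0 x),
      Real.norm_of_nonneg (add_nonneg (hf0 x) (hg0 x))] using hle x
  have hhp : MemLp h (ENNReal.ofReal p) μ := (hf.add hg).mono hh (ae_of_all _ hh_le)
  rw [integral_rpow_rpow_inv_eq_toReal_eLpNorm hp0 hhp hh0,
    integral_rpow_rpow_inv_eq_toReal_eLpNorm hp0 hf hf0,
    integral_rpow_rpow_inv_eq_toReal_eLpNorm hp0 hg hg0,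
    ← ENNReal.toReal_add hf.eLpNorm_ne_top hg.eLpNorm_ne_top]
  refine ENNReal.toReal_mono (ENNReal.add_ne_top.2 ⟨hf.eLpNorm_ne_top, hg.eLpNorm_ne_top⟩) ?_
  calc eLpNorm h (ENNReal.ofReal p) μ ≤ eLpNorm (f + g) (ENNReal.ofReal p) μ :=
        eLpNorm_mono hh_le
    _ ≤ _ := eLpNorm_add_le hf.1 hg.1 (by simpa using hp)

lemma MemLp.max_sub_const_zero [IsFiniteMeasure μ] {f : α → ℝ} {p : ENNReal}
    (hf : MemLp f p μ) (c : ℝ) : MemLp (fun x => max (f x - c) 0) p μ :=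
  (hf.sub (memLp_const c)).sup (memLp_const 0)

end

theorem mean_semideviation_subadditive
    {Ω : Type*} [MeasureSpace Ω] [IsProbabilityMeasure (volume : Measure Ω)]
    (p κ : ℝ) (hp : 1 ≤ p) (hκ : κ ∈ Set.Icc (0:ℝ) 1)
    (X Y : Ω → ℝ) (hX : Integrable X) (hY : Integrable Y)
    (hXp : Integrable (fun ω => |X ω| ^ p))
    (hYp : Integrable (fun ω => |Y ω| ^ p)) :
    (∫ ω, (X ω + Y ω)) +
        κ * (∫ ω, max ((X ω + Y ω) - ∫ ω', (X ω' + Y ω')) 0 ^ p) ^ (1/p) ≤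
      ((∫ ω, X ω) + κ * (∫ ω, max (X ω - ∫ ω', X ω') 0 ^ p) ^ (1/p)) +
        ((∫ ω, Y ω) + κ * (∫ ω, max (Y ω - ∫ ω', Y ω') 0 ^ p) ^ (1/p)) := by
  have hp0 : 0 < p := by linarith
  have hXY : ∫ ω, (X ω + Y ω) = (∫ ω, X ω) + ∫ ω, Y ω := integral_add hX hY
  rw [hXY]
  have hdev : (∫ ω, max (X ω + Y ω - ((∫ ω, X ω) + ∫ ω, Y ω)) 0 ^ p) ^ (1 / p) ≤
      (∫ ω, max (X ω - ∫ ω', X ω') 0 ^ p) ^ (1 / p) +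
        (∫ ω, max (Y ω - ∫ ω', Y ω') 0 ^ p) ^ (1 / p) :=
    integral_rpow_rpow_inv_le_add hp
      (MemLp.max_sub_const_zero (memLp_ofReal_of_integrable_abs_rpow hp0 hX.1 hXp) _)
      (MemLp.max_sub_const_zero (memLp_ofReal_of_integrable_abs_rpow hp0 hY.1 hYp) _)
      (by fun_prop) (fun _ => le_max_right _ _) (fun _ => le_max_right _ _)
      (fun _ => le_max_right _ _) (fun ω => max_add_sub_add_zero_le _ _ _ _)
  linarith [mul_le_mul_of_nonneg_left hdev hκ.1]
end

section
/- Let v(h) = min_{z∈Z} f₁(z, h(z)) with Z compact, f₁ continuous and f₁(z, ·) differentiable with gradient ∇f₁ jointly continuous, and suppose the minimizer set at h̄ is a singleton {ẑ}. Then v is Hadamard directionally differentiable at h̄ ∈ C(Z) and v′(h̄; d) = ⟨∇f₁(ẑ, h̄(ẑ)), d(ẑ)⟩ for every direction d ∈ C(Z). -/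
/-!
Both difference quotients that bracket `(v(h̄ + tₙdₙ) - v(h̄)) / tₙ` are slopes of `f₁(z, ·)`:
from above at the fixed point `ẑ`, from below at a minimiser `zₙ` of the perturbed problem.
By compactness and uniqueness of the minimiser, `zₙ → ẑ`; by the mean value theorem each
slope is `⟨∇f₁(zₙ, ξₙ), dₙ(zₙ)⟩` at an intermediate point `ξₙ → h̄(ẑ)`, so by continuity of
the gradient both bounds tend to `⟨∇f₁(ẑ, h̄(ẑ)), d(ẑ)⟩`.
-/

open Filter Topology Set Function

section MeanValue

variable {E : Type*} [NormedAddCommGroup E] [InnerProductSpace ℝ E]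

theorem exists_mem_Ioo_slope_eq_inner_gradient {f : E → ℝ} {f' : E → E}
    (hf : ∀ y, HasFDerivAt f (innerSL ℝ (f' y)) y) (y w : E) {t : ℝ} (ht : 0 < t) :
    ∃ c ∈ Ioo 0 t, (f (y + t • w) - f y) / t = inner ℝ (f' (y + c • w)) w := by
  have hline : ∀ τ : ℝ, HasDerivAt (fun τ => f (y + τ • w)) (inner ℝ (f' (y + τ • w)) w) τ :=
    fun τ => by
      have hpath : HasDerivAt (fun τ : ℝ => y + τ • w) w τ := by
        simpa using ((hasDerivAt_id τ).smul_const w).const_add y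
      exact (hf _).comp_hasDerivAt τ hpath
  obtain ⟨c, hc, hslope⟩ := exists_hasDerivAt_eq_slope _ _ ht
    (fun τ _ => (hline τ).continuousAt.continuousWithinAt) (fun τ _ => hline τ)
  exact ⟨c, hc, by simpa using hslope.symm⟩

theorem tendsto_slope_inner_gradient {Z ι : Type*} [TopologicalSpace Z]
    {f : Z → E → ℝ} {f' : Z → E → E} (hf : ∀ z y, HasFDerivAt (f z) (innerSL ℝ (f' z y)) y)
    {z₀ : Z} {y₀ w₀ : E} (hf' : ContinuousAt (uncurry f') (z₀, y₀))
    {l : Filter ι} {z : ι → Z} {y w : ι → E} {t : ι → ℝ}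
    (hz : Tendsto z l (𝓝 z₀)) (hy : Tendsto y l (𝓝 y₀)) (hw : Tendsto w l (𝓝 w₀))
    (ht : ∀ i, 0 < t i) (ht0 : Tendsto t l (𝓝 0)) :
    Tendsto (fun i => (f (z i) (y i + t i • w i) - f (z i) (y i)) / t i) l
      (𝓝 (inner ℝ (f' z₀ y₀) w₀)) := by
  choose c hc hslope using fun i =>
    exists_mem_Ioo_slope_eq_inner_gradient (hf (z i)) (y i) (w i) (ht i)
  have hc0 : Tendsto c l (𝓝 0) :=
    tendsto_of_tendsto_of_tendsto_of_le_of_le tendsto_const_nhds ht0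
      (fun i => (hc i).1.le) (fun i => (hc i).2.le)
  have hξ : Tendsto (fun i => y i + c i • w i) l (𝓝 y₀) := by
    simpa using hy.add (hc0.smul hw)
  exact ((hf'.tendsto.comp (hz.prodMk_nhds hξ)).inner hw).congr fun i => (hslope i).symm

end MeanValue

section Minimizers

variable {Z : Type*} [TopologicalSpace Z] [CompactSpace Z]

theorem Continuous.exists_iInf_eq [Nonempty Z] {α : Type*} [ConditionallyCompleteLinearOrder α]
    [TopologicalSpace α] [ClosedIicTopology α] {φ : Z → α} (hφ : Continuous φ) :
    ∃ z, ⨅ z', φ z' = φ z :=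
  let ⟨z, hz⟩ := (isCompact_range hφ).sInf_mem (range_nonempty φ)
  ⟨z, hz.symm⟩

theorem tendsto_minimizer_of_unique_minimizer {X ι α : Type*} [TopologicalSpace X]
    [LinearOrder α] [TopologicalSpace α] [OrderClosedTopology α]
    {g : X → Z → α} (hg : Continuous (uncurry g)) {l : Filter ι} {x : ι → X} {x₀ : X}
    (hx : Tendsto x l (𝓝 x₀)) {z : ι → Z} (hmin : ∀ i z', g (x i) (z i) ≤ g (x i) z')
    {z₀ : Z} (huniq : ∀ z, (∀ z', g x₀ z ≤ g x₀ z') → z = z₀) :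
    Tendsto z l (𝓝 z₀) := by
  have hclosed : IsClosed {p : X × Z | ∀ z', g p.1 p.2 ≤ g p.1 z'} := by
    simp only [ofPred_forall]
    exact isClosed_iInter fun z' => isClosed_le hg
      (hg.comp (continuous_fst.prodMk continuous_const : Continuous fun p : X × Z => (p.1, z')))
  refine tendsto_nhds_of_unique_mapClusterPt fun z₁ hz₁ => huniq z₁ ?_
  obtain ⟨U, hUl, hzU⟩ := mapClusterPt_iff_ultrafilter.1 hz₁
  exact hclosed.mem_of_tendsto ((hx.mono_left hUl).prodMk_nhds hzU)
    (Eventually.of_forall fun i => hmin i)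

end Minimizers

theorem optimal_value_hadamard_derivative_general
    {Z : Type*} [MetricSpace Z] [CompactSpace Z] (s : ℕ)
    (f₁ : Z → EuclideanSpace ℝ (Fin s) → ℝ)
    (hcont : Continuous (fun q : Z × EuclideanSpace ℝ (Fin s) => f₁ q.1 q.2))
    (f₁' : Z → EuclideanSpace ℝ (Fin s) → EuclideanSpace ℝ (Fin s))
    (hdiff : ∀ (z : Z) (y : EuclideanSpace ℝ (Fin s)),
      HasFDerivAt (f₁ z) (innerSL ℝ (f₁' z y)) y)
    (hgradcont : Continuous
      (fun q : Z × EuclideanSpace ℝ (Fin s) => f₁' q.1 q.2))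
    (hbar : C(Z, EuclideanSpace ℝ (Fin s))) (zhat : Z)
    (hunique : {z : Z | f₁ z (hbar z) = ⨅ z' : Z, f₁ z' (hbar z')} = {zhat})
    (d : C(Z, EuclideanSpace ℝ (Fin s)))
    (t : ℕ → ℝ) (ht : ∀ n, 0 < t n) (ht0 : Tendsto t atTop (𝓝 0))
    (dseq : ℕ → C(Z, EuclideanSpace ℝ (Fin s)))
    (hd : Tendsto dseq atTop (𝓝 d)) :
    Tendsto
      (fun n =>
        ((⨅ z : Z, f₁ z ((hbar + t n • dseq n) z)) - ⨅ z : Z, f₁ z (hbar z))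
          / t n)
      atTop (𝓝 (inner ℝ (f₁' zhat (hbar zhat)) (d zhat) : ℝ)) := by
  have : Nonempty Z := ⟨zhat⟩
  set g : C(Z, EuclideanSpace ℝ (Fin s)) → Z → ℝ := fun h z => f₁ z (h z)
  have hg : Continuous (uncurry g) := hcont.comp (continuous_snd.prodMk continuous_eval)
  have hbdd : ∀ h, BddBelow (range (g h)) := fun h => (isCompact_range (hg.uncurry_left h)).bddBelow
  choose zmin hzmin using fun h => (hg.uncurry_left h).exists_iInf_eq
  have hzhat : ⨅ z, g hbar z = g hbar zhat := (hunique.ge (mem_singleton zhat)).symm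
  have huniq : ∀ z, (∀ z', g hbar z ≤ g hbar z') → z = zhat := fun z hz =>
    hunique.subset (le_antisymm (le_ciInf hz) (ciInf_le (hbdd hbar) z))
  have hhn : Tendsto (fun n => hbar + t n • dseq n) atTop (𝓝 hbar) := by
    have h := (tendsto_const_nhds (x := hbar)).add (ht0.smul hd)
    rwa [zero_smul ℝ d, add_zero] at h
  set hn := fun n => hbar + t n • dseq n
  have hzn : Tendsto (fun n => zmin (hn n)) atTop (𝓝 zhat) :=
    tendsto_minimizer_of_unique_minimizer hg hhn
      (fun n z' => (hzmin (hn n)).symm.trans_le (ciInf_le (hbdd _) z')) huniq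
  have hlower := tendsto_slope_inner_gradient hdiff hgradcont.continuousAt hzn
    ((hbar.continuous.tendsto zhat).comp hzn) ((continuous_eval.tendsto (d, zhat)).comp
      (hd.prodMk_nhds hzn)) ht ht0
  have hupper := tendsto_slope_inner_gradient (z₀ := zhat) (y₀ := hbar zhat) hdiff
    hgradcont.continuousAt tendsto_const_nhds
    tendsto_const_nhds (((continuous_eval_const zhat).tendsto d).comp hd) ht ht0
  refine tendsto_of_tendsto_of_tendsto_of_le_of_le hlower hupper (fun n => ?_) (fun n => ?_)
  · refine div_le_div_of_nonneg_right (sub_le_sub (hzmin (hn n)).ge ?_) (ht n).le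
    exact ciInf_le (hbdd hbar) _
  · refine div_le_div_of_nonneg_right (sub_le_sub ?_ hzhat.ge) (ht n).le
    exact ciInf_le (hbdd (hn n)) zhat

theorem optimal_value_hadamard_derivative
    {Z : Type*} [MetricSpace Z] [CompactSpace Z] [Nonempty Z] (s : ℕ)
    (f₁ : Z → EuclideanSpace ℝ (Fin s) → ℝ)
    (hcont : Continuous (fun q : Z × EuclideanSpace ℝ (Fin s) => f₁ q.1 q.2))
    (f₁' : Z → EuclideanSpace ℝ (Fin s) → EuclideanSpace ℝ (Fin s))
    (hdiff : ∀ (z : Z) (y : EuclideanSpace ℝ (Fin s)),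
      HasFDerivAt (f₁ z) (innerSL ℝ (f₁' z y)) y)
    (hgradcont : Continuous
      (fun q : Z × EuclideanSpace ℝ (Fin s) => f₁' q.1 q.2))
    (hbar : C(Z, EuclideanSpace ℝ (Fin s))) (zhat : Z)
    (hunique : {z : Z | f₁ z (hbar z) = ⨅ z' : Z, f₁ z' (hbar z')} = {zhat})
    (d : C(Z, EuclideanSpace ℝ (Fin s)))
    (t : ℕ → ℝ) (ht : ∀ n, 0 < t n) (ht0 : Tendsto t atTop (𝓝 0))
    (dseq : ℕ → C(Z, EuclideanSpace ℝ (Fin s)))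
    (hd : Tendsto dseq atTop (𝓝 d)) :
    Tendsto
      (fun n =>
        ((⨅ z : Z, f₁ z ((hbar + t n • dseq n) z)) - ⨅ z : Z, f₁ z (hbar z))
          / t n)
      atTop (𝓝 (inner ℝ (f₁' zhat (hbar zhat)) (d zhat) : ℝ)) :=
  optimal_value_hadamard_derivative_general s f₁ hcont f₁' hdiff hgradcont hbar zhat hunique d t ht
    ht0 dseq hd
end

section
/- If X ≤ Y almost surely and p ≥ 1, κ ∈ [0,1], then the mean–semideviation risk measure is monotone on bounded random variables: ρ(X) = E[X] + κ‖(X − E[X])₊‖_p ≤ E[Y] + κ‖(Y − E[Y])₊‖_p = ρ(Y), provided κ ≤ 1. -/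
/-!
Put `c = E[Y] - E[X] ≥ 0`. Since `X ≤ Y`, pointwise `(X - E[X])₊ ≤ (Y - E[Y])₊ + c`, so Minkowski's
inequality on a probability space gives `‖(X - E[X])₊‖_p ≤ ‖(Y - E[Y])₊‖_p + c`. Multiplying by
`κ ∈ [0, 1]` costs at most `κ c ≤ c`, which is exactly the gap between the two means.
-/

open MeasureTheory

section

variable {Ω : Type*} [MeasurableSpace Ω] {μ : Measure Ω}

noncomputable def upperSemideviation (μ : Measure Ω) (p : ℝ) (X : Ω → ℝ) : ℝ :=
  (∫ ω, max (X ω - ∫ ω', X ω' ∂μ) 0 ^ p ∂μ) ^ (1 / p)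

noncomputable def meanSemideviation (μ : Measure Ω) (p κ : ℝ) (X : Ω → ℝ) : ℝ :=
  (∫ ω, X ω ∂μ) + κ * upperSemideviation μ p X

lemma max_sub_zero_le_max_sub_zero_add {x y a b : ℝ} (hxy : x ≤ y) (hab : a ≤ b) :
    max (x - a) 0 ≤ max (y - b) 0 + (b - a) :=
  max_le (by linarith [le_max_left (y - b) 0]) (by linarith [le_max_right (y - b) 0])

lemma rpow_integral_rpow_eq_toReal_eLpNorm {p : ℝ} (hp : 0 < p) {f : Ω → ℝ}
    (hf0 : ∀ᵐ ω ∂μ, 0 ≤ f ω) (hf : MemLp f (ENNReal.ofReal p) μ) :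
    (∫ ω, f ω ^ p ∂μ) ^ (1 / p) = (eLpNorm f (ENNReal.ofReal p) μ).toReal := by
  rw [hf.eLpNorm_eq_integral_rpow_norm (by simpa using hp) ENNReal.ofReal_ne_top,
    ENNReal.toReal_ofReal hp.le, ENNReal.toReal_ofReal (by positivity), one_div]
  congr 1
  refine integral_congr_ae (hf0.mono fun ω hω => ?_)
  simp [Real.norm_eq_abs, abs_of_nonneg hω]

lemma rpow_integral_rpow_le_add_const [IsProbabilityMeasure μ] {p c : ℝ} (hp : 1 ≤ p)
    (hc : 0 ≤ c) {f g : Ω → ℝ} (hf0 : ∀ᵐ ω ∂μ, 0 ≤ f ω) (hg0 : ∀ᵐ ω ∂μ, 0 ≤ g ω)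
    (hf : AEStronglyMeasurable f μ) (hg : MemLp g (ENNReal.ofReal p) μ)
    (hfg : ∀ᵐ ω ∂μ, f ω ≤ g ω + c) :
    (∫ ω, f ω ^ p ∂μ) ^ (1 / p) ≤ (∫ ω, g ω ^ p ∂μ) ^ (1 / p) + c := by
  have hp0 : 0 < p := zero_lt_one.trans_le hp
  have hf_le : ∀ᵐ ω ∂μ, ‖f ω‖ ≤ ‖g ω + c‖ := by
    filter_upwards [hf0, hg0, hfg] with ω hfω hgω hω
    rw [Real.norm_of_nonneg hfω, Real.norm_of_nonneg (by linarith)]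
    exact hω
  have hgc : MemLp (fun ω => g ω + c) (ENNReal.ofReal p) μ := hg.add (memLp_const c)
  have hminkowski : eLpNorm f (ENNReal.ofReal p) μ ≤ eLpNorm g (ENNReal.ofReal p) μ + ‖c‖ₑ :=
    calc eLpNorm f (ENNReal.ofReal p) μ
        ≤ eLpNorm (fun ω => g ω + c) (ENNReal.ofReal p) μ := eLpNorm_mono_ae hf_le
      _ ≤ eLpNorm g (ENNReal.ofReal p) μ + eLpNorm (fun _ => c) (ENNReal.ofReal p) μ :=
          eLpNorm_add_le hg.aestronglyMeasurable aestronglyMeasurable_const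
            (by simpa using hp)
      _ = eLpNorm g (ENNReal.ofReal p) μ + ‖c‖ₑ := by
          rw [eLpNorm_const c (by simpa using hp0) (NeZero.ne μ)]
          simp
  rw [rpow_integral_rpow_eq_toReal_eLpNorm hp0 hf0 (hgc.of_le hf hf_le),
    rpow_integral_rpow_eq_toReal_eLpNorm hp0 hg0 hg]
  calc (eLpNorm f (ENNReal.ofReal p) μ).toReal
      ≤ (eLpNorm g (ENNReal.ofReal p) μ + ‖c‖ₑ).toReal :=
        ENNReal.toReal_mono (ENNReal.add_ne_top.2 ⟨hg.eLpNorm_ne_top, enorm_ne_top⟩) hminkowski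
    _ = (eLpNorm g (ENNReal.ofReal p) μ).toReal + c := by
        rw [ENNReal.toReal_add hg.eLpNorm_ne_top enorm_ne_top, toReal_enorm,
          Real.norm_of_nonneg hc]

lemma upperSemideviation_le_add_sub_integral [IsProbabilityMeasure μ] {p : ℝ} (hp : 1 ≤ p)
    {X Y : Ω → ℝ} (hX : Integrable X μ) (hY : MemLp Y (ENNReal.ofReal p) μ)
    (hXY : X ≤ᵐ[μ] Y) :
    upperSemideviation μ p X ≤
      upperSemideviation μ p Y + ((∫ ω, Y ω ∂μ) - ∫ ω, X ω ∂μ) := by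
  have hYi : Integrable Y μ := hY.integrable (by simpa using hp)
  have hmean : ∫ ω, X ω ∂μ ≤ ∫ ω, Y ω ∂μ := integral_mono_ae hX hYi hXY
  refine rpow_integral_rpow_le_add_const hp (sub_nonneg.2 hmean)
    (ae_of_all _ fun _ => le_max_right _ _) (ae_of_all _ fun _ => le_max_right _ _)
    (hX.sub (integrable_const _)).pos_part.aestronglyMeasurable ?_ ?_
  · exact (hY.sub (memLp_const _)).pos_part
  · filter_upwards [hXY] with ω hω
    exact max_sub_zero_le_max_sub_zero_add hω hmean

theorem meanSemideviation_mono [IsProbabilityMeasure μ] {p κ : ℝ} (hp : 1 ≤ p)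
    (hκ : κ ∈ Set.Icc (0 : ℝ) 1) {X Y : Ω → ℝ} (hX : Integrable X μ)
    (hY : MemLp Y (ENNReal.ofReal p) μ) (hXY : X ≤ᵐ[μ] Y) :
    meanSemideviation μ p κ X ≤ meanSemideviation μ p κ Y := by
  have hYi : Integrable Y μ := hY.integrable (by simpa using hp)
  have hgap : 0 ≤ (∫ ω, Y ω ∂μ) - ∫ ω, X ω ∂μ := sub_nonneg.2 (integral_mono_ae hX hYi hXY)
  have hsemi := upperSemideviation_le_add_sub_integral hp hX hY hXY
  unfold meanSemideviation
  calc (∫ ω, X ω ∂μ) + κ * upperSemideviation μ p X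
      ≤ (∫ ω, X ω ∂μ) + κ * (upperSemideviation μ p Y + ((∫ ω, Y ω ∂μ) - ∫ ω, X ω ∂μ)) := by
        gcongr
        exact hκ.1
    _ ≤ (∫ ω, Y ω ∂μ) + κ * upperSemideviation μ p Y := by
        nlinarith [mul_le_of_le_one_left hgap hκ.2]

end

theorem mean_semideviation_monotone_bounded
    {Ω : Type*} [MeasureSpace Ω] [IsProbabilityMeasure (volume : Measure Ω)]
    (p κ : ℝ) (hp : 1 ≤ p) (hκ : κ ∈ Set.Icc (0:ℝ) 1)
    (X Y : Ω → ℝ)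
    (hXm : AEStronglyMeasurable X volume) (hYm : AEStronglyMeasurable Y volume)
    (hXb : ∃ C : ℝ, ∀ᵐ ω, |X ω| ≤ C) (hYb : ∃ C : ℝ, ∀ᵐ ω, |Y ω| ≤ C)
    (hXY : ∀ᵐ ω, X ω ≤ Y ω) :
    (∫ ω, X ω) + κ * (∫ ω, max (X ω - ∫ ω', X ω') 0 ^ p) ^ (1/p) ≤
      (∫ ω, Y ω) + κ * (∫ ω, max (Y ω - ∫ ω', Y ω') 0 ^ p) ^ (1/p) := by
  obtain ⟨CX, hCX⟩ := hXb
  obtain ⟨CY, hCY⟩ := hYb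
  exact meanSemideviation_mono hp hκ (.of_bound hXm CX hCX) (.of_bound hYm CY hCY) hXY
end
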